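/- Let v be a dense vertex lying in almost-clique C_j. Then v has at most εΔ dense neighbors lying outside C_j; that is, the external degree of v satisfies d̄(v) ≤ εΔ. -/

import Mathlib

/-! A dense neighbour of `v` that is also a friend of `v` is adjacent to `v` in the friend graph,
so the external dense neighbours of `v` and its friends are disjoint sets of neighbours of `v`.
Hence `d̄(v) ≤ deg v - |friends v| ≤ Δ - (1 - ε)Δ = εΔ`. -/

open Finset

attribute [local instance] Classical.propDecidable

variable {V : Type*}

/-- `uv` is a friend edge: they are adjacent and share at least `(1-ε)Δ` neighbors. -/
def friendAdj [Fintype V] [DecidableEq V] (G : SimpleGraph V) [DecidableRel G.Adj]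
    (Δ : ℕ) (ε : ℝ) (u v : V) : Prop :=
  G.Adj u v ∧ (1 - ε) * (Δ : ℝ) ≤ ((G.neighborFinset u ∩ G.neighborFinset v).card : ℝ)

/-- The friends of `v`. -/
noncomputable def friends [Fintype V] [DecidableEq V] (G : SimpleGraph V) [DecidableRel G.Adj]
    (Δ : ℕ) (ε : ℝ) (v : V) : Finset V :=
  Finset.univ.filter (fun w => friendAdj G Δ ε v w)

/-- `v` is dense: it has at least `(1-ε)Δ` friends. -/
def isDense [Fintype V] [DecidableEq V] (G : SimpleGraph V) [DecidableRel G.Adj]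
    (Δ : ℕ) (ε : ℝ) (v : V) : Prop :=
  (1 - ε) * (Δ : ℝ) ≤ ((friends G Δ ε v).card : ℝ)

/-- The graph on dense vertices whose edges are the friend edges; its connected
components are the almost-cliques. -/
def friendGraph [Fintype V] [DecidableEq V] (G : SimpleGraph V) [DecidableRel G.Adj]
    (Δ : ℕ) (ε : ℝ) : SimpleGraph V where
  Adj u v := friendAdj G Δ ε u v ∧ isDense G Δ ε u ∧ isDense G Δ ε v
  symm := by
    constructor
    rintro u v ⟨⟨hadj, hcard⟩, hu, hv⟩
    exact ⟨⟨hadj.symm, by rwa [Finset.inter_comm]⟩, hv, hu⟩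
  loopless := ⟨fun v h => G.loopless.irrefl v h.1.1⟩

section AlmostClique

variable [Fintype V] [DecidableEq V] (G : SimpleGraph V) [DecidableRel G.Adj] (Δ : ℕ) (ε : ℝ)

lemma friends_subset_neighborFinset (v : V) : friends G Δ ε v ⊆ G.neighborFinset v :=
  fun _ hw => (G.mem_neighborFinset _ _).2 (mem_filter.1 hw).2.1

lemma notMem_friends_of_not_reachable {v w : V} (hv : isDense G Δ ε v) (hw : isDense G Δ ε w)
    (hvw : ¬ (friendGraph G Δ ε).Reachable v w) : w ∉ friends G Δ ε v := fun hF =>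
  hvw (SimpleGraph.Adj.reachable (G := friendGraph G Δ ε) ⟨(mem_filter.1 hF).2, hv, hw⟩)

end AlmostClique

theorem stmt_2_general [Fintype V] [DecidableEq V] (G : SimpleGraph V) [DecidableRel G.Adj]
    (Δ : ℕ) (ε : ℝ) (hΔ : ∀ w, G.degree w ≤ Δ)
    (v : V) (hv : isDense G Δ ε v) :
    (((G.neighborFinset v).filter
        (fun w => isDense G Δ ε w ∧ ¬ (friendGraph G Δ ε).Reachable v w)).card : ℝ)
      ≤ ε * (Δ : ℝ) := by
  set external := (G.neighborFinset v).filter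
      (fun w => isDense G Δ ε w ∧ ¬ (friendGraph G Δ ε).Reachable v w)
  have hdisj : Disjoint external (friends G Δ ε v) := disjoint_left.2 fun _ hw =>
    have ⟨_, hdense, hunreach⟩ := mem_filter.1 hw
    notMem_friends_of_not_reachable G Δ ε hv hdense hunreach
  have hcard : external.card + (friends G Δ ε v).card ≤ Δ := calc
    _ = (external ∪ friends G Δ ε v).card := (card_union_of_disjoint hdisj).symm
    _ ≤ (G.neighborFinset v).card :=
      card_le_card (union_subset (filter_subset _ _) (friends_subset_neighborFinset G Δ ε v))
    _ = G.degree v := G.card_neighborFinset_eq_degree v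
    _ ≤ Δ := hΔ v
  have hcard' : (external.card : ℝ) + (friends G Δ ε v).card ≤ Δ := by exact_mod_cast hcard
  unfold isDense at hv
  linarith

/-- A dense vertex `v` has at most `εΔ` dense neighbors outside its own almost-clique:
the external degree satisfies `d̄(v) ≤ εΔ`. -/
theorem stmt_2 [Fintype V] [DecidableEq V] (G : SimpleGraph V) [DecidableRel G.Adj]
    (Δ : ℕ) (ε : ℝ) (hΔ : ∀ w, G.degree w ≤ Δ) (hε0 : 0 < ε) (hε1 : ε < 1)
    (v : V) (hv : isDense G Δ ε v) :
    (((G.neighborFinset v).filter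
        (fun w => isDense G Δ ε w ∧ ¬ (friendGraph G Δ ε).Reachable v w)).card : ℝ)
      ≤ ε * (Δ : ℝ) :=
  stmt_2_general G Δ ε hΔ v hv
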